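/- Let C be a linear subspace of ℝ^o with orthogonal projection matrix P_c. Given a key matrix U ∈ ℝ^{i×n} with UUᵀ invertible and value matrix V ∈ ℝ^{o×n}, the matrix Ŵ = (I − P_c) V Uᵀ (U Uᵀ)⁻¹ minimizes ‖WU − V‖_F² among all W ∈ ℝ^{o×i} satisfying W u_j ⊥ C for every column u_j of U. -/

import Mathlib

/-!
Write `R = Ŵ U - V` for the residual of `Ŵ = (I - P) V Uᵀ (U Uᵀ)⁻¹`. Since `I - P` is idempotent,
`R` satisfies the projected normal equations `(I - P) R Uᵀ = 0`. Any feasible `W` has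
`P (W - Ŵ) U = 0`, so `(W - Ŵ) U = (I - P)(W - Ŵ) U`, and as `I - P` is symmetric the normal
equations make `(W - Ŵ) U` Frobenius-orthogonal to `R`. Pythagoras then gives
`‖W U - V‖² = ‖R‖² + ‖(W - Ŵ) U‖² ≥ ‖R‖²`.
-/

open Matrix BigOperators

/-- Squared Frobenius norm of a matrix. -/
def frobSq {m n : ℕ} (A : Matrix (Fin m) (Fin n) ℝ) : ℝ := ∑ i, ∑ j, (A i j) ^ 2

namespace Matrix

variable {l m n p α : Type*}

theorem mul_eq_zero_iff_forall_mulVec_col [Fintype m] [NonUnitalNonAssocSemiring α]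
    {A : Matrix l m α} {B : Matrix m n α} :
    A * B = 0 ↔ ∀ j, A *ᵥ (fun k => B k j) = 0 := by
  refine ⟨fun h j => ?_, fun h => ?_⟩
  · ext a
    simpa [mul_apply', mulVec] using congrFun (congrFun h a) j
  · ext a j
    simpa [mul_apply', mulVec] using congrFun (h j) a

theorem trace_mul_transpose_eq_zero_of_normal_eq [Fintype m] [Fintype n] [Fintype p]
    [CommRing α] [DecidableEq m]
    {P : Matrix m m α} (hPsym : Pᵀ = P) {X : Matrix m p α} {U : Matrix p n α}
    {R : Matrix m n α} (hPXU : P * X * U = 0) (hR : (1 - P) * R * Uᵀ = 0) :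
    trace (X * U * Rᵀ) = 0 := by
  have hXU : X * U = (1 - P) * X * U := by
    rw [Matrix.sub_mul, Matrix.sub_mul, hPXU, Matrix.one_mul, sub_zero]
  have hURt : U * Rᵀ * (1 - P) = 0 := by
    rw [← transpose_transpose (U * Rᵀ * (1 - P))]
    simp only [transpose_mul, transpose_transpose, transpose_sub, transpose_one, hPsym,
      ← Matrix.mul_assoc, hR, transpose_zero]
  rw [hXU, Matrix.mul_assoc ((1 - P) * X), trace_mul_comm, ← Matrix.mul_assoc, hURt,
    Matrix.zero_mul, trace_zero]

theorem projected_lstsq_normal_eq [Fintype l] [Fintype m] [Fintype n] [CommRing α]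
    [DecidableEq l] [DecidableEq m]
    {P : Matrix l l α} (hP : IsIdempotentElem P) {U : Matrix m n α} (hU : IsUnit (U * Uᵀ))
    (V : Matrix l n α) :
    (1 - P) * ((1 - P) * V * Uᵀ * (U * Uᵀ)⁻¹ * U - V) * Uᵀ = 0 := by
  have hdet : IsUnit (U * Uᵀ).det := (isUnit_iff_isUnit_det _).mp hU
  have hUUt : (1 - P) * V * Uᵀ * (U * Uᵀ)⁻¹ * U * Uᵀ = (1 - P) * V * Uᵀ := by
    rw [Matrix.mul_assoc _ U, nonsing_inv_mul_cancel_right _ _ hdet]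
  rw [Matrix.mul_sub, Matrix.sub_mul, Matrix.mul_assoc (1 - P) _ Uᵀ, hUUt,
    ← Matrix.mul_assoc, ← Matrix.mul_assoc, hP.one_sub.eq, sub_self]

end Matrix

theorem frobSq_eq_trace {m n : ℕ} (A : Matrix (Fin m) (Fin n) ℝ) :
    frobSq A = trace (A * Aᵀ) := by
  simp [frobSq, trace, mul_apply, sq]

theorem frobSq_nonneg {m n : ℕ} (A : Matrix (Fin m) (Fin n) ℝ) : 0 ≤ frobSq A :=
  Finset.sum_nonneg fun _ _ => Finset.sum_nonneg fun _ _ => sq_nonneg _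

theorem frobSq_add_of_trace_mul_transpose_eq_zero {m n : ℕ} {A B : Matrix (Fin m) (Fin n) ℝ}
    (h : trace (A * Bᵀ) = 0) : frobSq (A + B) = frobSq A + frobSq B := by
  have h' : trace (B * Aᵀ) = 0 := by
    rw [← trace_transpose, transpose_mul, transpose_transpose, h]
  rw [frobSq_eq_trace, frobSq_eq_trace, frobSq_eq_trace, transpose_add, Matrix.add_mul,
    Matrix.mul_add, Matrix.mul_add, trace_add, trace_add, trace_add, h, h', add_zero, zero_add]

theorem dama_constrained_ols
    {i n o : ℕ}
    (P : Matrix (Fin o) (Fin o) ℝ)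
    (hPsym : Pᵀ = P) (hPidem : P * P = P)
    (U : Matrix (Fin i) (Fin n) ℝ)
    (hU : IsUnit (U * Uᵀ))
    (V : Matrix (Fin o) (Fin n) ℝ) :
    (∀ j : Fin n, P.mulVec (((1 - P) * V * Uᵀ * (U * Uᵀ)⁻¹).mulVec (fun k => U k j)) = 0) ∧
    (∀ W : Matrix (Fin o) (Fin i) ℝ,
      (∀ j : Fin n, P.mulVec (W.mulVec (fun k => U k j)) = 0) →
      frobSq ((1 - P) * V * Uᵀ * (U * Uᵀ)⁻¹ * U - V) ≤ frobSq (W * U - V)) := by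
  set Wh := (1 - P) * V * Uᵀ * (U * Uᵀ)⁻¹
  have hPWh : P * Wh = 0 := by
    simp only [Wh, ← Matrix.mul_assoc, Matrix.mul_sub, Matrix.mul_one, hPidem, sub_self,
      Matrix.zero_mul]
  have feasible_iff (W : Matrix (Fin o) (Fin i) ℝ) :
      (∀ j, P *ᵥ (W *ᵥ fun k => U k j) = 0) ↔ P * W * U = 0 := by
    simp only [mulVec_mulVec, ← mul_eq_zero_iff_forall_mulVec_col]
  refine ⟨(feasible_iff Wh).2 (by rw [hPWh, Matrix.zero_mul]), fun W hW => ?_⟩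
  have hPXU : P * (W - Wh) * U = 0 := by
    rw [Matrix.mul_sub, Matrix.sub_mul, (feasible_iff W).1 hW, hPWh, Matrix.zero_mul, sub_zero]
  have horth := trace_mul_transpose_eq_zero_of_normal_eq hPsym hPXU
    (projected_lstsq_normal_eq hPidem hU V)
  calc frobSq (Wh * U - V) ≤ frobSq (Wh * U - V) + frobSq ((W - Wh) * U) :=
        le_add_of_nonneg_right (frobSq_nonneg _)
    _ = frobSq ((W - Wh) * U + (Wh * U - V)) := by
        rw [frobSq_add_of_trace_mul_transpose_eq_zero horth, add_comm]
    _ = frobSq (W * U - V) := by rw [Matrix.sub_mul]; abel_nf
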